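/- For all x, y ∈ ℝ⁷, ‖x × y‖² = ‖x‖²‖y‖² − ⟨x, y⟩². In particular, if x and y are orthogonal then ‖x × y‖ = ‖x‖·‖y‖, so the cross product of two orthonormal vectors is a unit vector. -/

import Mathlib

noncomputable section

open scoped InnerProductSpace

/-- `3 × 3` determinant of coordinates `a, b, c` of `(x, y, z)`. -/
def det3 (a b c : Fin 7) (x y z : EuclideanSpace ℝ (Fin 7)) : ℝ :=
  x a * (y b * z c - y c * z b) - x b * (y a * z c - y c * z a) +
    x c * (y a * z b - y b * z a)

/-- The associative calibration `φ` of Harvey–Lawson on `ℝ⁷`. -/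
def phi (x y z : EuclideanSpace ℝ (Fin 7)) : ℝ :=
  det3 4 5 6 x y z - det3 4 0 1 x y z - det3 4 2 3 x y z -
    det3 5 0 2 x y z - det3 5 3 1 x y z - det3 6 0 3 x y z - det3 6 1 2 x y z

/-! The defining identity `⟪x × y, z⟫ = φ(x, y, z)` determines `x × y` uniquely, so it is the
explicit bilinear map `cross7` below; for that map the claim is a polynomial identity in the
fourteen coordinates of `x` and `y`, a seven-dimensional analogue of Lagrange's identity. -/

/-- The `i`-th coordinate is `φ(x, y, eᵢ)`. -/
def cross7 (x y : EuclideanSpace ℝ (Fin 7)) : EuclideanSpace ℝ (Fin 7) :=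
  !₂[-(x 1 * y 4) - x 2 * y 5 - x 3 * y 6 + x 4 * y 1 + x 5 * y 2 + x 6 * y 3,
    x 0 * y 4 - x 2 * y 6 + x 3 * y 5 - x 4 * y 0 - x 5 * y 3 + x 6 * y 2,
    x 0 * y 5 + x 1 * y 6 - x 3 * y 4 + x 4 * y 3 - x 5 * y 0 - x 6 * y 1,
    x 0 * y 6 - x 1 * y 5 + x 2 * y 4 - x 4 * y 2 + x 5 * y 1 - x 6 * y 0,
    -(x 0 * y 1) + x 1 * y 0 - x 2 * y 3 + x 3 * y 2 + x 5 * y 6 - x 6 * y 5,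
    -(x 0 * y 2) + x 1 * y 3 + x 2 * y 0 - x 3 * y 1 - x 4 * y 6 + x 6 * y 4,
    -(x 0 * y 3) - x 1 * y 2 + x 2 * y 1 + x 3 * y 0 + x 4 * y 5 - x 5 * y 4]

theorem inner_cross7 (x y z : EuclideanSpace ℝ (Fin 7)) :
    ⟪cross7 x y, z⟫_ℝ = phi x y z := by
  simp only [cross7, phi, det3, PiLp.inner_apply, Fin.sum_univ_seven, RCLike.inner_apply,
    conj_trivial, Fin.isValue, Matrix.cons_val_zero, Matrix.cons_val_one, Matrix.cons_val]
  ring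

theorem eq_cross7_of_inner_eq_phi {c x y : EuclideanSpace ℝ (Fin 7)}
    (hc : ∀ z, ⟪c, z⟫_ℝ = phi x y z) : c = cross7 x y :=
  ext_inner_right ℝ fun z => by rw [hc, inner_cross7]

theorem norm_cross7_sq (x y : EuclideanSpace ℝ (Fin 7)) :
    ‖cross7 x y‖ ^ 2 = ‖x‖ ^ 2 * ‖y‖ ^ 2 - ⟪x, y⟫_ℝ ^ 2 := by
  simp only [cross7, EuclideanSpace.real_norm_sq_eq, PiLp.inner_apply, Fin.sum_univ_seven,
    RCLike.inner_apply, conj_trivial, Fin.isValue, Matrix.cons_val_zero, Matrix.cons_val_one,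
    Matrix.cons_val]
  ring

/-- For the cross product `x × y` determined by `⟪x × y, z⟫ = φ(x, y, z)`,
one has `‖x × y‖² = ‖x‖²‖y‖² − ⟪x, y⟫²`; in particular, for orthogonal `x, y`
it satisfies `‖x × y‖ = ‖x‖·‖y‖`, so the cross product of two orthonormal
vectors is a unit vector. -/
theorem norm_cross_sq (cross : EuclideanSpace ℝ (Fin 7) → EuclideanSpace ℝ (Fin 7) →
      EuclideanSpace ℝ (Fin 7))
    (hcross : ∀ x y z, ⟪cross x y, z⟫_ℝ = phi x y z) :
    ∀ x y : EuclideanSpace ℝ (Fin 7),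
      ‖cross x y‖ ^ 2 = ‖x‖ ^ 2 * ‖y‖ ^ 2 - ⟪x, y⟫_ℝ ^ 2 ∧
      (⟪x, y⟫_ℝ = 0 → ‖cross x y‖ = ‖x‖ * ‖y‖) := by
  intro x y
  have hsq : ‖cross x y‖ ^ 2 = ‖x‖ ^ 2 * ‖y‖ ^ 2 - ⟪x, y⟫_ℝ ^ 2 := by
    rw [eq_cross7_of_inner_eq_phi (hcross x y), norm_cross7_sq]
  refine ⟨hsq, fun horth => ?_⟩
  rw [← sq_eq_sq₀ (norm_nonneg _) (by positivity), hsq, horth]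
  ring
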